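/- arXiv:2403.16896 — 6 statements merged into one kernel-verified Lean document; each statement's English description precedes it below -/
import Mathlib

section
/- With the notation of Theorem 2.1 (compact SVD A = U_r Σ_r V_r*, unitary completions U_k, V_k, and U_k* e, f* V_k invertible), the matrix Ã = A + e D f* has inverse Ã⁻¹ = G + x D⁻¹ y*, where G = (V_r − V_k (f* V_k)⁻¹ f* V_r) Σ_r⁻¹ (U_r* − U_r* e (U_k* e)⁻¹ U_k*), x = V_k (f* V_k)⁻¹, and y = U_k (e* U_k)⁻¹. -/
open Matrix

theorem stmt2 (n k r : ℕ) (hk : 1 ≤ k) (hnk : k < n) (hr : r = n - k)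
    (A : Matrix (Fin n) (Fin n) ℂ) (hrank : A.rank = r)
    (Ur : Matrix (Fin n) (Fin r) ℂ) (Uk : Matrix (Fin n) (Fin k) ℂ)
    (Vr : Matrix (Fin n) (Fin r) ℂ) (Vk : Matrix (Fin n) (Fin k) ℂ)
    (S : Matrix (Fin r) (Fin r) ℂ) (hS : IsUnit S)
    (hA : A = Ur * S * Vrᴴ)
    (hUr : Urᴴ * Ur = 1) (hUk : Ukᴴ * Uk = 1) (hUrk : Ukᴴ * Ur = 0)
    (hUfull : Ur * Urᴴ + Uk * Ukᴴ = 1)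
    (hVr : Vrᴴ * Vr = 1) (hVk : Vkᴴ * Vk = 1) (hVrk : Vkᴴ * Vr = 0)
    (hVfull : Vr * Vrᴴ + Vk * Vkᴴ = 1)
    (e f : Matrix (Fin n) (Fin k) ℂ)
    (hUke : IsUnit (Ukᴴ * e)) (hfVk : IsUnit (fᴴ * Vk))
    (D : Matrix (Fin k) (Fin k) ℂ) (hD : IsUnit D) :
    IsUnit (A + e * D * fᴴ) ∧
    (A + e * D * fᴴ)⁻¹ =
      (Vr - Vk * (fᴴ * Vk)⁻¹ * fᴴ * Vr) * S⁻¹ *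
        (Urᴴ - Urᴴ * e * (Ukᴴ * e)⁻¹ * Ukᴴ) +
      Vk * (fᴴ * Vk)⁻¹ * D⁻¹ * (Uk * (eᴴ * Uk)⁻¹)ᴴ := by
  have hyt : (Uk * (eᴴ * Uk)⁻¹)ᴴ = (Ukᴴ * e)⁻¹ * Ukᴴ := by
    rw [conjTranspose_mul, conjTranspose_nonsing_inv, conjTranspose_mul,
      conjTranspose_conjTranspose]
  set B : Matrix (Fin n) (Fin n) ℂ :=
    (Vr - Vk * (fᴴ * Vk)⁻¹ * fᴴ * Vr) * S⁻¹ *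
        (Urᴴ - Urᴴ * e * (Ukᴴ * e)⁻¹ * Ukᴴ) +
      Vk * (fᴴ * Vk)⁻¹ * D⁻¹ * (Uk * (eᴴ * Uk)⁻¹)ᴴ with hB
  have hSd : IsUnit S.det := (isUnit_iff_isUnit_det S).mp hS
  have hEd : IsUnit (Ukᴴ * e).det := (isUnit_iff_isUnit_det _).mp hUke
  have hFd : IsUnit (fᴴ * Vk).det := (isUnit_iff_isUnit_det _).mp hfVk
  have hDd : IsUnit D.det := (isUnit_iff_isUnit_det D).mp hD
  have hS1 : ∀ (X : Matrix (Fin r) (Fin n) ℂ), S⁻¹ * (S * X) = X := by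
    intro X; rw [← Matrix.mul_assoc, nonsing_inv_mul _ hSd, Matrix.one_mul]
  have hE1 : ∀ (X : Matrix (Fin k) (Fin n) ℂ), (Ukᴴ * e)⁻¹ * (Ukᴴ * (e * X)) = X := by
    intro X
    rw [← Matrix.mul_assoc Ukᴴ e X, ← Matrix.mul_assoc, nonsing_inv_mul _ hEd, Matrix.one_mul]
  have hF1 : ∀ (X : Matrix (Fin k) (Fin n) ℂ), (fᴴ * Vk)⁻¹ * (fᴴ * (Vk * X)) = X := by
    intro X
    rw [← Matrix.mul_assoc fᴴ Vk X, ← Matrix.mul_assoc, nonsing_inv_mul _ hFd, Matrix.one_mul]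
  have hD1 : ∀ (X : Matrix (Fin k) (Fin n) ℂ), D⁻¹ * (D * X) = X := by
    intro X; rw [← Matrix.mul_assoc, nonsing_inv_mul _ hDd, Matrix.one_mul]
  have hUr1 : ∀ (X : Matrix (Fin r) (Fin n) ℂ), Urᴴ * (Ur * X) = X := by
    intro X; rw [← Matrix.mul_assoc, hUr, Matrix.one_mul]
  have hUrk1 : ∀ (X : Matrix (Fin r) (Fin n) ℂ), Ukᴴ * (Ur * X) = 0 := by
    intro X; rw [← Matrix.mul_assoc, hUrk, Matrix.zero_mul]
  have hVV : Vr * Vrᴴ = 1 - Vk * Vkᴴ := by rw [← hVfull]; abel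
  have key : B * (A + e * D * fᴴ) = 1 := by
    rw [hB, hA, hyt]
    simp only [Matrix.mul_add, Matrix.add_mul, Matrix.sub_mul, Matrix.mul_sub,
      Matrix.mul_assoc, hS1, hE1, hF1, hD1, hUr1, hUrk1, Matrix.mul_zero,
      Matrix.zero_mul, sub_zero, hVV]
    simp only [← Matrix.mul_assoc, hVV]
    simp only [Matrix.mul_assoc, Matrix.mul_sub, Matrix.sub_mul, Matrix.mul_one, hF1]
    abel
  have hunit : IsUnit (A + e * D * fᴴ) :=
    (isUnit_iff_isUnit_det _).mpr (Matrix.isUnit_det_of_left_inverse key)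
  exact ⟨hunit, inv_eq_left_inv key⟩
end

section
/- With A, e, f, G, x, y as in Theorem 2.1, the identities A G + e y* = I_n and G A + x f* = I_n hold. -/
open Matrix

theorem stmt6 (n k r : ℕ) (hk : 1 ≤ k) (hnk : k < n) (hr : r = n - k)
    (A : Matrix (Fin n) (Fin n) ℂ) (hrank : A.rank = r)
    (Ur : Matrix (Fin n) (Fin r) ℂ) (Uk : Matrix (Fin n) (Fin k) ℂ)
    (Vr : Matrix (Fin n) (Fin r) ℂ) (Vk : Matrix (Fin n) (Fin k) ℂ)
    (S : Matrix (Fin r) (Fin r) ℂ) (hS : IsUnit S)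
    (hA : A = Ur * S * Vrᴴ)
    (hUr : Urᴴ * Ur = 1) (hUk : Ukᴴ * Uk = 1) (hUrk : Ukᴴ * Ur = 0)
    (hUfull : Ur * Urᴴ + Uk * Ukᴴ = 1)
    (hVr : Vrᴴ * Vr = 1) (hVk : Vkᴴ * Vk = 1) (hVrk : Vkᴴ * Vr = 0)
    (hVfull : Vr * Vrᴴ + Vk * Vkᴴ = 1)
    (e f : Matrix (Fin n) (Fin k) ℂ)
    (hUke : IsUnit (Ukᴴ * e)) (hfVk : IsUnit (fᴴ * Vk)) :
    A * ((Vr - Vk * (fᴴ * Vk)⁻¹ * fᴴ * Vr) * S⁻¹ *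
        (Urᴴ - Urᴴ * e * (Ukᴴ * e)⁻¹ * Ukᴴ)) + e * (Uk * (eᴴ * Uk)⁻¹)ᴴ = 1 ∧
    ((Vr - Vk * (fᴴ * Vk)⁻¹ * fᴴ * Vr) * S⁻¹ *
        (Urᴴ - Urᴴ * e * (Ukᴴ * e)⁻¹ * Ukᴴ)) * A + (Vk * (fᴴ * Vk)⁻¹) * fᴴ = 1 := by
  have hSdet := (Matrix.isUnit_iff_isUnit_det S).mp hS
  have hSS : S * S⁻¹ = 1 := Matrix.mul_nonsing_inv S hSdet
  have hSS' : S⁻¹ * S = 1 := Matrix.nonsing_inv_mul S hSdet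
  have hEdet := (Matrix.isUnit_iff_isUnit_det _).mp hUke
  have hE : (Ukᴴ * e) * (Ukᴴ * e)⁻¹ = 1 := Matrix.mul_nonsing_inv _ hEdet
  have hFdet := (Matrix.isUnit_iff_isUnit_det _).mp hfVk
  have hF : (fᴴ * Vk)⁻¹ * (fᴴ * Vk) = 1 := Matrix.nonsing_inv_mul _ hFdet
  have hVrVk : Vrᴴ * Vk = 0 := by
    have := congrArg conjTranspose hVrk
    simpa using this
  have hUrUk : Urᴴ * Uk = 0 := by
    have := congrArg conjTranspose hUrk
    simpa using this
  have hy : (Uk * (eᴴ * Uk)⁻¹)ᴴ = (Ukᴴ * e)⁻¹ * Ukᴴ := by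
    rw [conjTranspose_mul, Matrix.conjTranspose_nonsing_inv]
    simp [conjTranspose_mul]
  constructor
  · rw [hA, hy]
    have h1 : Ur * S * Vrᴴ * ((Vr - Vk * (fᴴ * Vk)⁻¹ * fᴴ * Vr) * S⁻¹ *
        (Urᴴ - Urᴴ * e * (Ukᴴ * e)⁻¹ * Ukᴴ))
        = Ur * Urᴴ - Ur * (Urᴴ * (e * ((Ukᴴ * e)⁻¹ * Ukᴴ))) := by
      have : Vrᴴ * (Vr - Vk * (fᴴ * Vk)⁻¹ * fᴴ * Vr) = 1 := by
        rw [Matrix.mul_sub, hVr]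
        rw [show Vrᴴ * (Vk * (fᴴ * Vk)⁻¹ * fᴴ * Vr)
            = Vrᴴ * Vk * ((fᴴ * Vk)⁻¹ * fᴴ * Vr) by
          simp [Matrix.mul_assoc]]
        rw [hVrVk]
        simp
      calc Ur * S * Vrᴴ * ((Vr - Vk * (fᴴ * Vk)⁻¹ * fᴴ * Vr) * S⁻¹ *
            (Urᴴ - Urᴴ * e * (Ukᴴ * e)⁻¹ * Ukᴴ))
          = Ur * (S * ((Vrᴴ * (Vr - Vk * (fᴴ * Vk)⁻¹ * fᴴ * Vr)) * (S⁻¹ *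
            (Urᴴ - Urᴴ * e * (Ukᴴ * e)⁻¹ * Ukᴴ)))) := by
            simp [Matrix.mul_assoc]
        _ = Ur * (S * (S⁻¹ * (Urᴴ - Urᴴ * e * (Ukᴴ * e)⁻¹ * Ukᴴ))) := by rw [this]; simp
        _ = Ur * (Urᴴ - Urᴴ * e * (Ukᴴ * e)⁻¹ * Ukᴴ) := by
            rw [← Matrix.mul_assoc S, hSS]; simp
        _ = Ur * Urᴴ - Ur * (Urᴴ * (e * ((Ukᴴ * e)⁻¹ * Ukᴴ))) := by
            rw [Matrix.mul_sub]; simp [Matrix.mul_assoc]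
    rw [h1]
    have h2 : e * ((Ukᴴ * e)⁻¹ * Ukᴴ) = Ur * (Urᴴ * (e * ((Ukᴴ * e)⁻¹ * Ukᴴ)))
        + Uk * (Ukᴴ * (e * ((Ukᴴ * e)⁻¹ * Ukᴴ))) := by
      have := congrArg (· * (e * ((Ukᴴ * e)⁻¹ * Ukᴴ))) hUfull
      simpa [Matrix.add_mul, Matrix.mul_assoc] using this.symm
    have h3 : Uk * (Ukᴴ * (e * ((Ukᴴ * e)⁻¹ * Ukᴴ))) = Uk * Ukᴴ := by
      rw [show Ukᴴ * (e * ((Ukᴴ * e)⁻¹ * Ukᴴ)) = (Ukᴴ * e) * (Ukᴴ * e)⁻¹ * Ukᴴ by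
        simp [Matrix.mul_assoc], hE]
      simp
    rw [h3] at h2
    rw [show e * ((Ukᴴ * e)⁻¹ * Ukᴴ) = e * (Ukᴴ * e)⁻¹ * Ukᴴ by simp [Matrix.mul_assoc]] at h2 ⊢
    nth_rewrite 2 [h2]
    rw [← hUfull]
    abel
  · rw [hA]
    have h1 : (Urᴴ - Urᴴ * e * (Ukᴴ * e)⁻¹ * Ukᴴ) * (Ur * S * Vrᴴ) = S * Vrᴴ := by
      rw [Matrix.sub_mul, show Urᴴ * e * (Ukᴴ * e)⁻¹ * Ukᴴ * (Ur * S * Vrᴴ)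
          = Urᴴ * e * (Ukᴴ * e)⁻¹ * ((Ukᴴ * Ur) * (S * Vrᴴ)) by simp [Matrix.mul_assoc],
        hUrk, show Urᴴ * (Ur * S * Vrᴴ) = (Urᴴ * Ur) * (S * Vrᴴ) by simp [Matrix.mul_assoc],
        hUr]
      simp
    have h2 : (Vr - Vk * (fᴴ * Vk)⁻¹ * fᴴ * Vr) * S⁻¹ *
        (Urᴴ - Urᴴ * e * (Ukᴴ * e)⁻¹ * Ukᴴ) * (Ur * S * Vrᴴ)
        = (Vr - Vk * (fᴴ * Vk)⁻¹ * fᴴ * Vr) * Vrᴴ := by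
      rw [Matrix.mul_assoc _ _ (Ur * S * Vrᴴ), h1, Matrix.mul_assoc, ← Matrix.mul_assoc S⁻¹,
        hSS']
      simp
    rw [h2, Matrix.sub_mul]
    have h3 : Vk * (fᴴ * Vk)⁻¹ * fᴴ = Vk * (fᴴ * Vk)⁻¹ * fᴴ * (Vr * Vrᴴ)
        + Vk * (fᴴ * Vk)⁻¹ * ((fᴴ * Vk) * Vkᴴ) := by
      have := congrArg (Vk * (fᴴ * Vk)⁻¹ * fᴴ * ·) hVfull
      simpa [Matrix.mul_add, Matrix.mul_assoc] using this.symm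
    have h4 : Vk * (fᴴ * Vk)⁻¹ * ((fᴴ * Vk) * Vkᴴ) = Vk * Vkᴴ := by
      rw [← Matrix.mul_assoc, Matrix.mul_assoc Vk, hF]
      simp
    rw [h4] at h3
    rw [show Vk * (fᴴ * Vk)⁻¹ * fᴴ * (Vr * Vrᴴ) = Vk * (fᴴ * Vk)⁻¹ * fᴴ * Vr * Vrᴴ by
      simp [Matrix.mul_assoc]] at h3
    nth_rewrite 2 [h3]
    rw [← hVfull]
    abel
end

section
/- Singular matrix determinant lemma: With Ã = A + e D f* as in Theorem 2.1, det(Ã) = det(A + e f*) · det(D). -/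
/-!
Writing `A + e M f* = [U_r e] · diag(Σ_r, M) · [V_r f]*` exhibits `det (A + e M f*)` as `det M`
times a factor independent of `M`; comparing `M = D` with `M = 1` gives the claim.
-/

open Matrix

namespace Matrix

variable {R ι m p : Type*} [CommRing R] [Fintype m] [Fintype p]

theorem mul_mul_add_mul_mul_eq_fromCols_mul_fromBlocks_mul_fromRows (U : Matrix ι m R)
    (S : Matrix m m R) (V : Matrix m ι R) (E : Matrix ι p R) (M : Matrix p p R)
    (F : Matrix p ι R) :
    U * S * V + E * M * F = fromCols U E * fromBlocks S 0 0 M * fromRows V F := by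
  rw [fromCols_mul_fromBlocks, fromCols_mul_fromRows]
  simp

variable [Fintype ι] [DecidableEq ι] [DecidableEq m] [DecidableEq p]

theorem det_mul_mul_add_mul_mul_eq_mul_det (σ : m ⊕ p ≃ ι) (U : Matrix ι m R)
    (S : Matrix m m R) (V : Matrix m ι R) (E : Matrix ι p R) (M : Matrix p p R)
    (F : Matrix p ι R) :
    det (U * S * V + E * M * F) =
      det ((fromCols U E).submatrix id σ.symm) * det S *
        det ((fromRows V F).submatrix σ.symm id) * det M := by
  have hsquare : U * S * V + E * M * F =
      (fromCols U E).submatrix id σ.symm * (fromBlocks S 0 0 M).submatrix σ.symm σ.symm *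
        (fromRows V F).submatrix σ.symm id := by
    rw [submatrix_mul_equiv, submatrix_mul_equiv, submatrix_id_id,
      mul_mul_add_mul_mul_eq_fromCols_mul_fromBlocks_mul_fromRows]
  rw [hsquare, det_mul, det_mul, det_submatrix_equiv_self, det_fromBlocks_zero₂₁]
  ring

theorem det_mul_mul_add_mul_mul (h : Fintype.card m + Fintype.card p = Fintype.card ι)
    (U : Matrix ι m R) (S : Matrix m m R) (V : Matrix m ι R) (E : Matrix ι p R)
    (M : Matrix p p R) (F : Matrix p ι R) :
    det (U * S * V + E * M * F) = det (U * S * V + E * F) * det M := by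
  have σ : m ⊕ p ≃ ι := Fintype.equivOfCardEq (by rw [Fintype.card_sum, h])
  have hone := det_mul_mul_add_mul_mul_eq_mul_det σ U S V E 1 F
  rw [Matrix.mul_one, det_one, mul_one] at hone
  rw [det_mul_mul_add_mul_mul_eq_mul_det σ, hone]

end Matrix

theorem stmt11_general (n k r : ℕ) (hnk : k < n) (hr : r = n - k)
    (A : Matrix (Fin n) (Fin n) ℂ)
    (Ur : Matrix (Fin n) (Fin r) ℂ)
    (Vr : Matrix (Fin n) (Fin r) ℂ)
    (S : Matrix (Fin r) (Fin r) ℂ)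
    (hA : A = Ur * S * Vrᴴ)
    (e f : Matrix (Fin n) (Fin k) ℂ)
    (D : Matrix (Fin k) (Fin k) ℂ) :
    (A + e * D * fᴴ).det = (A + e * fᴴ).det * D.det := by
  subst hA
  exact det_mul_mul_add_mul_mul (by simp only [Fintype.card_fin]; omega) _ _ _ _ _ _

theorem stmt11 (n k r : ℕ) (hk : 1 ≤ k) (hnk : k < n) (hr : r = n - k)
    (A : Matrix (Fin n) (Fin n) ℂ) (hrank : A.rank = r)
    (Ur : Matrix (Fin n) (Fin r) ℂ) (Uk : Matrix (Fin n) (Fin k) ℂ)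
    (Vr : Matrix (Fin n) (Fin r) ℂ) (Vk : Matrix (Fin n) (Fin k) ℂ)
    (S : Matrix (Fin r) (Fin r) ℂ) (hS : IsUnit S)
    (hA : A = Ur * S * Vrᴴ)
    (hUr : Urᴴ * Ur = 1) (hUk : Ukᴴ * Uk = 1) (hUrk : Ukᴴ * Ur = 0)
    (hUfull : Ur * Urᴴ + Uk * Ukᴴ = 1)
    (hVr : Vrᴴ * Vr = 1) (hVk : Vkᴴ * Vk = 1) (hVrk : Vkᴴ * Vr = 0)
    (hVfull : Vr * Vrᴴ + Vk * Vkᴴ = 1)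
    (e f : Matrix (Fin n) (Fin k) ℂ)
    (hUke : IsUnit (Ukᴴ * e)) (hfVk : IsUnit (fᴴ * Vk))
    (D : Matrix (Fin k) (Fin k) ℂ) :
    (A + e * D * fᴴ).det = (A + e * fᴴ).det * D.det :=
  stmt11_general n k r hnk hr A Ur Vr S hA e f D
end

section
/- Let U = [U_r U_k] be an n×n unitary matrix with U_r of size n×r and U_k of size n×k, and e ∈ ℂ^{n×k} with U_k* e invertible. Then the block matrix [U_r e] is invertible with inverse given in block-row form by ( U_r* − U_r* e (U_k* e)⁻¹ U_k* ; (U_k* e)⁻¹ U_k* ), i.e., [U_r e]⁻¹ = [[U_r* − U_r* e (U_k* e)⁻¹ U_k*], [(U_k* e)⁻¹ U_k*]]. -/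
open Matrix

theorem stmt13 (n k r : ℕ) (hn : n = r + k)
    (Ur : Matrix (Fin n) (Fin r) ℂ) (Uk : Matrix (Fin n) (Fin k) ℂ)
    (hUr : Urᴴ * Ur = 1) (hUk : Ukᴴ * Uk = 1) (hUrk : Ukᴴ * Ur = 0)
    (hUfull : Ur * Urᴴ + Uk * Ukᴴ = 1)
    (e : Matrix (Fin n) (Fin k) ℂ) (hUke : IsUnit (Ukᴴ * e)) :
    fromCols Ur e *
      fromRows (Urᴴ - Urᴴ * e * (Ukᴴ * e)⁻¹ * Ukᴴ) ((Ukᴴ * e)⁻¹ * Ukᴴ) = 1 ∧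
    fromRows (Urᴴ - Urᴴ * e * (Ukᴴ * e)⁻¹ * Ukᴴ) ((Ukᴴ * e)⁻¹ * Ukᴴ) *
      fromCols Ur e = 1 := by
  have hdet : IsUnit (Ukᴴ * e).det := (Matrix.isUnit_iff_isUnit_det _).mp hUke
  have h1 : (Ukᴴ * e) * (Ukᴴ * e)⁻¹ = 1 := Matrix.mul_nonsing_inv _ hdet
  have h2 : (Ukᴴ * e)⁻¹ * (Ukᴴ * e) = 1 := Matrix.nonsing_inv_mul _ hdet
  have ha : (Urᴴ - Urᴴ * e * (Ukᴴ * e)⁻¹ * Ukᴴ) * Ur = 1 := by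
    rw [Matrix.sub_mul, Matrix.mul_assoc, Matrix.mul_assoc, hUrk, Matrix.mul_zero,
      Matrix.mul_zero, hUr, sub_zero]
  have hb : (Urᴴ - Urᴴ * e * (Ukᴴ * e)⁻¹ * Ukᴴ) * e = 0 := by
    simp only [Matrix.sub_mul, Matrix.mul_assoc, h2, Matrix.mul_one, sub_self]
  have hc : (Ukᴴ * e)⁻¹ * Ukᴴ * Ur = 0 := by
    rw [Matrix.mul_assoc, hUrk, Matrix.mul_zero]
  have hd : (Ukᴴ * e)⁻¹ * Ukᴴ * e = 1 := by
    rw [Matrix.mul_assoc, h2]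
  constructor
  · rw [fromCols_mul_fromRows]
    have key : Ur * (Urᴴ - Urᴴ * e * (Ukᴴ * e)⁻¹ * Ukᴴ) + e * ((Ukᴴ * e)⁻¹ * Ukᴴ)
        = Ur * Urᴴ + (1 - Ur * Urᴴ) * (e * ((Ukᴴ * e)⁻¹ * Ukᴴ)) := by
      rw [Matrix.mul_sub, Matrix.sub_mul, Matrix.one_mul]
      simp only [Matrix.mul_assoc]
      abel
    rw [key]
    have hk : (1 : Matrix (Fin n) (Fin n) ℂ) - Ur * Urᴴ = Uk * Ukᴴ := by
      rw [← hUfull]; abel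
    rw [hk]
    calc Ur * Urᴴ + Uk * Ukᴴ * (e * ((Ukᴴ * e)⁻¹ * Ukᴴ))
        = Ur * Urᴴ + Uk * ((Ukᴴ * e) * (Ukᴴ * e)⁻¹) * Ukᴴ := by
          simp only [Matrix.mul_assoc]
      _ = 1 := by rw [h1, Matrix.mul_one, hUfull]
  · rw [fromRows_mul_fromCols, ha, hb, hc, hd, ← fromBlocks_one]
end

section
/- With notation of Corollary 2.2, suppose additionally (e y*)* = e y* and (x f*)* = x f*. Then G is the Moore–Penrose inverse of A. -/
open Matrix

theorem stmt16 (n k : ℕ)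
    (A G : Matrix (Fin n) (Fin n) ℂ) (e f x y : Matrix (Fin n) (Fin k) ℂ)
    (h1 : A * G + e * yᴴ = 1) (h2 : G * A + x * fᴴ = 1)
    (h3 : A * x = 0) (h4 : yᴴ * A = 0) (h5 : G * e = 0) (h6 : fᴴ * G = 0)
    (hey : (e * yᴴ)ᴴ = e * yᴴ) (hxf : (x * fᴴ)ᴴ = x * fᴴ) :
    A * G * A = A ∧ G * A * G = G ∧ (A * G)ᴴ = A * G ∧ (G * A)ᴴ = G * A := by
  have hGA : G * A = 1 - x * fᴴ := eq_sub_of_add_eq h2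
  have hAG : A * G = 1 - e * yᴴ := eq_sub_of_add_eq h1
  refine ⟨?_, ?_, ?_, ?_⟩
  · calc A * G * A = A * (G * A) := by rw [Matrix.mul_assoc]
    _ = A := by rw [hGA]; simp [Matrix.mul_sub, ← Matrix.mul_assoc, h3]
  · calc G * A * G = G * (A * G) := by rw [Matrix.mul_assoc]
    _ = G := by rw [hAG]; simp [Matrix.mul_sub, ← Matrix.mul_assoc, h5]
  · rw [hAG]; simp [hey]
  · rw [hGA]; simp [hxf]
end

section
/- With Ã = A + e D f* and its inverse Ã⁻¹ = G + x D⁻¹ y* as in Theorem 2.1, det(Ã⁻¹) = det(G + x y*) · det(D⁻¹). -/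
open Matrix

theorem stmt17 (n k r : ℕ) (hk : 1 ≤ k) (hnk : k < n) (hr : r = n - k)
    (A : Matrix (Fin n) (Fin n) ℂ) (hrank : A.rank = r)
    (Ur : Matrix (Fin n) (Fin r) ℂ) (Uk : Matrix (Fin n) (Fin k) ℂ)
    (Vr : Matrix (Fin n) (Fin r) ℂ) (Vk : Matrix (Fin n) (Fin k) ℂ)
    (S : Matrix (Fin r) (Fin r) ℂ) (hS : IsUnit S)
    (hA : A = Ur * S * Vrᴴ)
    (hUr : Urᴴ * Ur = 1) (hUk : Ukᴴ * Uk = 1) (hUrk : Ukᴴ * Ur = 0)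
    (hUfull : Ur * Urᴴ + Uk * Ukᴴ = 1)
    (hVr : Vrᴴ * Vr = 1) (hVk : Vkᴴ * Vk = 1) (hVrk : Vkᴴ * Vr = 0)
    (hVfull : Vr * Vrᴴ + Vk * Vkᴴ = 1)
    (e f : Matrix (Fin n) (Fin k) ℂ)
    (hUke : IsUnit (Ukᴴ * e)) (hfVk : IsUnit (fᴴ * Vk))
    (D : Matrix (Fin k) (Fin k) ℂ) (hD : IsUnit D) :
    ((Vr - Vk * (fᴴ * Vk)⁻¹ * fᴴ * Vr) * S⁻¹ *
        (Urᴴ - Urᴴ * e * (Ukᴴ * e)⁻¹ * Ukᴴ) +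
      Vk * (fᴴ * Vk)⁻¹ * D⁻¹ * (Uk * (eᴴ * Uk)⁻¹)ᴴ).det =
    ((Vr - Vk * (fᴴ * Vk)⁻¹ * fᴴ * Vr) * S⁻¹ *
        (Urᴴ - Urᴴ * e * (Ukᴴ * e)⁻¹ * Ukᴴ) +
      Vk * (fᴴ * Vk)⁻¹ * (Uk * (eᴴ * Uk)⁻¹)ᴴ).det * (D⁻¹).det := by
  have hUke' : (Ukᴴ * e)⁻¹ * (Ukᴴ * e) = 1 :=
    nonsing_inv_mul _ ((isUnit_iff_isUnit_det _).mp hUke)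
  have h1 : (Urᴴ - Urᴴ * e * (Ukᴴ * e)⁻¹ * Ukᴴ) * e = 0 := by
    rw [Matrix.sub_mul, Matrix.mul_assoc (Urᴴ * e * (Ukᴴ * e)⁻¹),
      Matrix.mul_assoc (Urᴴ * e), hUke', Matrix.mul_one, sub_self]
  set G := (Vr - Vk * (fᴴ * Vk)⁻¹ * fᴴ * Vr) * S⁻¹ *
      (Urᴴ - Urᴴ * e * (Ukᴴ * e)⁻¹ * Ukᴴ) with hG
  set x := Vk * (fᴴ * Vk)⁻¹ with hx
  set yH := (Uk * (eᴴ * Uk)⁻¹)ᴴ with hy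
  have hGe : G * e = 0 := by rw [hG, Matrix.mul_assoc, h1, Matrix.mul_zero]
  have hye : yH * e = 1 := by
    rw [hy, conjTranspose_mul, conjTranspose_nonsing_inv, conjTranspose_mul,
      conjTranspose_conjTranspose]
    rw [Matrix.mul_assoc, hUke']
  have key : G + x * D⁻¹ * yH = (G + x * yH) * (1 + e * ((D⁻¹ - 1) * yH)) := by
    have h2 : G * (e * ((D⁻¹ - 1) * yH)) = 0 := by
      rw [← Matrix.mul_assoc, hGe, Matrix.zero_mul]
    have h3 : x * yH * (e * ((D⁻¹ - 1) * yH)) = x * (D⁻¹ * yH) - x * yH := by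
      rw [Matrix.mul_assoc x yH, ← Matrix.mul_assoc yH, hye, Matrix.one_mul,
        Matrix.sub_mul, Matrix.one_mul, Matrix.mul_sub]
    rw [Matrix.mul_add, Matrix.mul_one, Matrix.add_mul, h2, h3, zero_add,
      Matrix.mul_assoc x D⁻¹]
    abel
  rw [key, det_mul, det_one_add_mul_comm, Matrix.mul_assoc (D⁻¹ - 1) yH e, hye, Matrix.mul_one]
  congr 2
  abel
end
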